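/- For all n ≥ 0 and r ≥ 0, p^{r+1}_1(n) = 2·p^r_1(n) − r^n, where p^r_1(n) := ∑_{s=0}^{n} C(n,s) · J^0_s · r^{n−s} and J^0_s is the s-th Fubini number. -/

import Mathlib

/-!
The Fubini numbers `F n = J 0 n` satisfy `∑ⱼ C(n,j) F j + 0ⁿ = 2 F n`, which follows from the
Stirling recurrence `S(n+1,k+1) = ∑ⱼ C(n,j) S(j,k)`. In terms of exponential generating functions
this says `F(x)·eˣ + 1 = 2 F(x)`, i.e. `F(x) = 1/(2 - eˣ)`. Since `p r` is the binomial convolution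
of `F` with `rⁿ`, its generating function is `F(x)·e^{rx}`, so that of `p (r+1)` is
`F(x)·eˣ·e^{rx} = (2 F(x) - 1)·e^{rx}`.
-/

/-- Stirling numbers of the second kind. -/
def stirling : ℕ → ℕ → ℕ
  | 0, 0 => 1
  | 0, _ + 1 => 0
  | _ + 1, 0 => 0
  | n + 1, s + 1 => (s + 1) * stirling n (s + 1) + stirling n s

/-- `J k n`: the number of barred preferential arrangements of an `n`-set with `k` bars,
given by its closed form `∑ S(n,s)·s!·C(k+s,s)`. -/
def J (k n : ℕ) : ℕ :=
  ∑ s ∈ Finset.range (n + 1), stirling n s * s.factorial * (k + s).choose s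

/-- `p k n`: barred preferential arrangements with `k` bars, one free section and
`k` restricted sections. -/
def p (k n : ℕ) : ℕ :=
  ∑ s ∈ Finset.range (n + 1), n.choose s * J 0 s * k ^ (n - s)

open Finset Nat PowerSeries

theorem stirling_eq_stirlingSecond : stirling = stirlingSecond := by
  funext n k
  induction n generalizing k with
  | zero => cases k <;> rfl
  | succ n ih => cases k <;> simp [stirling, stirlingSecond_succ_succ, ih]

theorem J_zero_eq_sum (n : ℕ) : J 0 n = ∑ s ∈ range (n + 1), stirlingSecond n s * s ! := by
  simp [J, stirling_eq_stirlingSecond]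

namespace Nat

theorem stirlingSecond_succ_succ_eq_sum_choose (n k : ℕ) :
    stirlingSecond (n + 1) (k + 1) = ∑ j ∈ range (n + 1), n.choose j * stirlingSecond j k := by
  induction n generalizing k with
  | zero => cases k <;> simp [stirlingSecond_succ_succ]
  | succ n ih =>
    have pascal := sum_choose_succ_mul (R := ℕ) (fun j _ => stirlingSecond j k) n
    simp only [cast_id] at pascal
    rw [pascal, ← ih]
    cases k with
    | zero => simp [stirlingSecond_succ_succ]
    | succ k =>
      simp only [stirlingSecond_succ_succ (n + 1), stirlingSecond_succ_succ _ k, mul_add,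
        sum_add_distrib, ← ih, mul_left_comm _ (k + 1), ← mul_sum]
      ring

end Nat

theorem J_zero_eq_sum_of_le {n N : ℕ} (h : n ≤ N) :
    J 0 n = ∑ s ∈ range (N + 1), stirlingSecond n s * s ! := by
  rw [J_zero_eq_sum]
  refine sum_subset (range_subset_range.2 (by omega)) fun s hs hns => ?_
  simp only [mem_range] at hs hns
  rw [stirlingSecond_eq_zero_of_lt (by omega), zero_mul]

theorem sum_choose_mul_J_zero (n : ℕ) :
    ∑ j ∈ range (n + 1), n.choose j * J 0 j + 0 ^ n = 2 * J 0 n := by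
  have hsum : ∑ j ∈ range (n + 1), n.choose j * J 0 j
      = ∑ s ∈ range (n + 1), s ! * stirlingSecond (n + 1) (s + 1) := by
    simp_rw [stirlingSecond_succ_succ_eq_sum_choose, mul_sum]
    rw [sum_comm]
    refine sum_congr rfl fun j hj => ?_
    rw [J_zero_eq_sum_of_le (mem_range_succ_iff.1 hj), mul_sum]
    exact sum_congr rfl fun s _ => by ring
  have hsplit : ∑ s ∈ range (n + 1), s ! * stirlingSecond (n + 1) (s + 1)
      = ∑ s ∈ range (n + 1), (s + 1) ! * stirlingSecond n (s + 1) + J 0 n := by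
    simp only [J_zero_eq_sum, stirlingSecond_succ_succ, mul_add, sum_add_distrib, factorial_succ]
    exact congrArg₂ _ (sum_congr rfl fun s _ => by ring) (sum_congr rfl fun s _ => by ring)
  have hshift : ∑ s ∈ range (n + 1), (s + 1) ! * stirlingSecond n (s + 1) + 0 ^ n = J 0 n := by
    rw [J_zero_eq_sum_of_le n.le_succ, sum_range_succ' _ (n + 1)]
    cases n <;> simp [mul_comm]
  omega

section ExponentialGeneratingFunction

variable {K : Type*} [Field K]

noncomputable def egf (a : ℕ → K) : K⟦X⟧ := mk fun n => a n / n !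

@[simp]
theorem coeff_egf (a : ℕ → K) (n : ℕ) : coeff n (egf a) = a n / n ! := coeff_mk _ _

theorem egf_mul [CharZero K] (a b : ℕ → K) :
    egf a * egf b = egf fun n => ∑ s ∈ range (n + 1), n.choose s * a s * b (n - s) := by
  ext n
  rw [coeff_mul, Nat.sum_antidiagonal_eq_sum_range_succ_mk, coeff_egf, sum_div]
  refine sum_congr rfl fun s hs => ?_
  rw [coeff_egf, coeff_egf, cast_choose K (mem_range_succ_iff.1 hs)]
  have : (n ! : K) ≠ 0 := cast_ne_zero.2 (factorial_ne_zero n)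
  field_simp

-- Any `Algebra ℚ K` instance is allowed, so that this applies to `exp ℚ` built on `Algebra.id ℚ`.
theorem egf_pow [Algebra ℚ K] (r : K) : egf (fun n => r ^ n) = rescale r (exp K) := by
  ext n
  simp [coeff_rescale, coeff_exp, div_eq_mul_inv]

end ExponentialGeneratingFunction

theorem egf_J_zero_mul_exp :
    egf (fun n => (J 0 n : ℚ)) * exp ℚ + 1 = 2 * egf (fun n => (J 0 n : ℚ)) := by
  have hexp : exp ℚ = egf fun _ => 1 := by simpa using (egf_pow (1 : ℚ)).symm
  have hone : (1 : ℚ⟦X⟧) = egf fun n => 0 ^ n := by simp [egf_pow]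
  rw [hexp, hone, egf_mul]
  ext n
  have hrec : ∑ j ∈ range (n + 1), (n.choose j * J 0 j : ℚ) + 0 ^ n = 2 * J 0 n := by
    exact_mod_cast sum_choose_mul_J_zero n
  simp only [two_mul, map_add, coeff_egf, ← add_div, mul_one]
  rw [hrec, two_mul]

theorem egf_p (r : ℕ) :
    egf (fun n => (p r n : ℚ)) = egf (fun n => (J 0 n : ℚ)) * rescale (r : ℚ) (exp ℚ) := by
  rw [← egf_pow, egf_mul]
  simp [p]

theorem p_succ_add_pow (n r : ℕ) : p (r + 1) n + r ^ n = 2 * p r n := by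
  have hegf : egf (fun n => (p (r + 1) n : ℚ)) + egf (fun n => (r : ℚ) ^ n)
      = 2 * egf (fun n => (p r n : ℚ)) := by
    rw [egf_p, egf_p, egf_pow, cast_succ, ← exp_mul_exp_eq_exp_add, rescale_one]
    linear_combination rescale (r : ℚ) (exp ℚ) * egf_J_zero_mul_exp
  have hcoeff := congrArg (coeff n) hegf
  simp only [two_mul, map_add, coeff_egf, ← add_div] at hcoeff
  rw [div_left_inj' (cast_ne_zero.2 (factorial_ne_zero n))] at hcoeff
  rw [two_mul]
  exact_mod_cast hcoeff

theorem stmt_14 (n r : ℕ) :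
    (p (r + 1) n : ℤ) = 2 * p r n - (r : ℤ) ^ n := by
  have h : (p (r + 1) n + r ^ n : ℤ) = 2 * p r n := by exact_mod_cast p_succ_add_pow n r
  linarith
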